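/- Let T be a closed densely defined operator with T*T = TT*. Then T(I + T*T) = (I + T*T)T as unbounded operators (in particular, for x ∈ dom(T*T·T) with the appropriate domain conditions, T(x + T*Tx) = Tx + T*T(Tx)). -/

import Mathlib

/-!
Compared through their graphs, composition with natural domains is associative,
`(I + S) T = T + S T` always, and `T (I + S) = T + T S` as soon as `dom S ⊆ dom T`.
Hence `T (I + T*T) = T + T (T*T)` and `(I + T*T) T = T + (T*T) T`, and the two
remainders agree by associativity and `T*T = T T*`.
-/

open LinearPMap
open scoped LinearPMap InnerProduct

variable {H : Type*} [NormedAddCommGroup H] [InnerProductSpace ℂ H] [CompleteSpace H]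

/-- The natural domain of the composition `g ∘ f`: `{x ∈ dom f : f x ∈ dom g}`. -/
def pcompDomain (g f : H →ₗ.[ℂ] H) : Submodule ℂ H where
  carrier := {x | ∃ hx : x ∈ f.domain, f ⟨x, hx⟩ ∈ g.domain}
  add_mem' := by
    rintro a b ⟨ha, ha'⟩ ⟨hb, hb'⟩
    refine ⟨add_mem ha hb, ?_⟩
    have h : f ⟨a + b, add_mem ha hb⟩ = f ⟨a, ha⟩ + f ⟨b, hb⟩ := f.map_add ⟨a, ha⟩ ⟨b, hb⟩
    rw [h]; exact add_mem ha' hb'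
  zero_mem' := ⟨zero_mem _, by
    have h : f ⟨0, zero_mem _⟩ = 0 := f.map_zero
    rw [h]; exact zero_mem _⟩
  smul_mem' := by
    rintro c a ⟨ha, ha'⟩
    refine ⟨Submodule.smul_mem _ c ha, ?_⟩
    have h : f ⟨c • a, Submodule.smul_mem _ c ha⟩ = c • f ⟨a, ha⟩ := f.map_smul c ⟨a, ha⟩
    rw [h]; exact Submodule.smul_mem _ c ha'

/-- Composition `g ∘ f` of unbounded operators, with its natural domain
`{x ∈ dom f : f x ∈ dom g}`. -/
noncomputable def pcomp (g f : H →ₗ.[ℂ] H) : H →ₗ.[ℂ] H :=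
  g.comp (f.domRestrict (pcompDomain g f)) (by
    rintro ⟨x, hx⟩
    obtain ⟨h1, h2⟩ := hx.1
    have : f.domRestrict (pcompDomain g f) ⟨x, hx⟩ = f ⟨x, h1⟩ :=
      LinearPMap.domRestrict_apply rfl
    rw [this]; exact h2)

/-- The identity as an unbounded operator. -/
noncomputable def pid : H →ₗ.[ℂ] H := LinearMap.id.toPMap ⊤

noncomputable example (T : H →ₗ.[ℂ] H) : H →ₗ.[ℂ] H := pid + pcomp T† T

namespace LinearPMap

variable {R E F : Type*} [Ring R] [AddCommGroup E] [Module R E] [AddCommGroup F] [Module R F]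

theorem mem_graph_add {f g : E →ₗ.[R] F} {x : E} {z : F} :
    (x, z) ∈ (f + g).graph ↔
      ∃ y₁ y₂, (x, y₁) ∈ f.graph ∧ (x, y₂) ∈ g.graph ∧ y₁ + y₂ = z := by
  rw [mem_graph_iff]
  constructor
  · rintro ⟨⟨x, hf, hg⟩, rfl, rfl⟩
    exact ⟨_, _, f.mem_graph ⟨x, hf⟩, g.mem_graph ⟨x, hg⟩, rfl⟩
  · rintro ⟨y₁, y₂, h₁, h₂, rfl⟩
    have hf := mem_domain_of_mem_graph h₁
    have hg := mem_domain_of_mem_graph h₂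
    rw [← image_iff hf] at h₁
    rw [← image_iff hg] at h₂
    exact ⟨⟨x, hf, hg⟩, rfl, by rw [h₁, h₂]; rfl⟩

theorem mem_graph_toPMap (f : E →ₗ[R] F) (p : Submodule R E) {x : E} {y : F} :
    (x, y) ∈ (f.toPMap p).graph ↔ x ∈ p ∧ f x = y := by
  simp

end LinearPMap

section

omit [CompleteSpace H]

theorem pcomp_apply (g f : H →ₗ.[ℂ] H) {x : H} (hx : x ∈ (pcomp g f).domain)
    (hf : x ∈ f.domain) (hg : f ⟨x, hf⟩ ∈ g.domain) :
    pcomp g f ⟨x, hx⟩ = g ⟨f ⟨x, hf⟩, hg⟩ :=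
  congr_arg g (Subtype.ext (domRestrict_apply rfl))

theorem mem_graph_pcomp {g f : H →ₗ.[ℂ] H} {x z : H} :
    (x, z) ∈ (pcomp g f).graph ↔ ∃ y, (x, y) ∈ f.graph ∧ (y, z) ∈ g.graph := by
  rw [mem_graph_iff]
  constructor
  · rintro ⟨⟨x, hx⟩, rfl, rfl⟩
    obtain ⟨hf, hg⟩ := hx.1
    refine ⟨_, f.mem_graph ⟨x, hf⟩, ?_⟩
    rw [pcomp_apply g f hx hf hg]
    exact g.mem_graph ⟨_, hg⟩
  · rintro ⟨y, h₁, h₂⟩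
    have hf := mem_domain_of_mem_graph h₁
    rw [← image_iff hf] at h₁
    subst h₁
    have hg := mem_domain_of_mem_graph h₂
    rw [← image_iff hg] at h₂
    have hx : x ∈ (pcomp g f).domain := ⟨⟨hf, hg⟩, hf⟩
    exact ⟨⟨x, hx⟩, rfl, by rw [pcomp_apply g f hx hf hg, h₂]⟩

theorem pcomp_domain_le (g f : H →ₗ.[ℂ] H) : (pcomp g f).domain ≤ f.domain :=
  fun _ hx => hx.2

theorem pcomp_assoc (h g f : H →ₗ.[ℂ] H) : pcomp h (pcomp g f) = pcomp (pcomp h g) f := by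
  refine eq_of_eq_graph (Submodule.ext fun ⟨x, z⟩ => ?_)
  simp only [mem_graph_pcomp]
  constructor
  · rintro ⟨w, ⟨y, hf, hg⟩, hh⟩
    exact ⟨y, hf, w, hg, hh⟩
  · rintro ⟨y, hf, w, hg, hh⟩
    exact ⟨w, ⟨y, hf, hg⟩, hh⟩

theorem pid_add_pcomp (S T : H →ₗ.[ℂ] H) : pcomp (pid + S) T = T + pcomp S T := by
  refine eq_of_eq_graph (Submodule.ext fun ⟨x, z⟩ => ?_)
  simp only [mem_graph_pcomp, mem_graph_add, pid, mem_graph_toPMap, Submodule.mem_top,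
    true_and, LinearMap.id_apply]
  constructor
  · rintro ⟨y, hT, _, w, rfl, hS, rfl⟩
    exact ⟨y, w, hT, ⟨y, hT, hS⟩, rfl⟩
  · rintro ⟨y, w, hT, ⟨y', hT', hS⟩, rfl⟩
    obtain rfl := T.mem_graph_snd_inj hT hT' rfl
    exact ⟨y, hT, y, w, rfl, hS, rfl⟩

theorem pcomp_pid_add {S T : H →ₗ.[ℂ] H} (hST : S.domain ≤ T.domain) :
    pcomp T (pid + S) = T + pcomp T S := by
  refine eq_of_eq_graph (Submodule.ext fun ⟨x, z⟩ => ?_)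
  simp only [mem_graph_pcomp, mem_graph_add, pid, mem_graph_toPMap, Submodule.mem_top,
    true_and, LinearMap.id_apply]
  constructor
  · rintro ⟨_, ⟨_, w, rfl, hS, rfl⟩, hT⟩
    have hx := T.mem_graph ⟨x, hST (mem_domain_of_mem_graph hS)⟩
    refine ⟨_, z - T ⟨x, _⟩, hx, ⟨w, hS, ?_⟩, add_sub_cancel _ _⟩
    simpa using sub_mem hT hx
  · rintro ⟨y, v, hT, ⟨w, hS, hT'⟩, rfl⟩
    exact ⟨x + w, ⟨x, w, rfl, hS, rfl⟩, add_mem hT hT'⟩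

end

theorem stmt12_general (T : H →ₗ.[ℂ] H) (hnormal : pcomp T† T = pcomp T T†) :
    pcomp T (pid + pcomp T† T) = pcomp (pid + pcomp T† T) T := by
  calc pcomp T (pid + pcomp T† T)
      = T + pcomp T (pcomp T† T) := pcomp_pid_add (pcomp_domain_le _ _)
    _ = T + pcomp (pcomp T† T) T := by rw [pcomp_assoc, hnormal]
    _ = pcomp (pid + pcomp T† T) T := (pid_add_pcomp _ _).symm

theorem stmt12 (T : H →ₗ.[ℂ] H) (hclosed : T.IsClosed)
    (hdense : Dense (T.domain : Set H)) (hnormal : pcomp T† T = pcomp T T†) :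
    pcomp T (pid + pcomp T† T) = pcomp (pid + pcomp T† T) T :=
  stmt12_general T hnormal
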